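/- arXiv:math/0509561 — 11 statements merged into one kernel-verified Lean document; each statement's English description precedes it below -/
import Mathlib

section
/- Let F(x,X) be the determinant of the 5×5 matrix whose i-th column is (1, xᵢ², xᵢ⁴, xᵢXᵢ, Xᵢ²). Then for all x = (x₁,…,x₅) ∈ ℂ⁵, all X = (X₁,…,X₅) ∈ ℂ⁵ and all t ∈ ℂ, one has F(x, X + t·x) = F(x, X), i.e. F(x₁,…,x₅, X₁+tx₁, …, X₅+tx₅) = F(x₁,…,x₅, X₁,…,X₅). -/
/-!
Substituting `X ↦ X + t x` fixes the rows `1, x², x⁴` and sends `xX ↦ xX + t x²` and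
`X² ↦ X² + 2t xX + t² x²`. So the matrix at `(x, X + t x)` is the matrix at `(x, X)` multiplied
on the left by a unipotent lower triangular matrix, which has determinant `1`.
-/

/-- The determinant `F(x,X)` of the 5×5 matrix whose `i`-th column is
`(1, xᵢ², xᵢ⁴, xᵢXᵢ, Xᵢ²)`. -/
noncomputable def F (x X : Fin 5 → ℂ) : ℂ :=
  Matrix.det (Matrix.of fun (i j : Fin 5) =>
    ![(1 : ℂ), x j ^ 2, x j ^ 4, x j * X j, X j ^ 2] i)

section

variable {R ι : Type*} [CommRing R]

def FMatrix (x X : ι → R) : Matrix (Fin 5) ι R :=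
  Matrix.of fun i j => ![1, x j ^ 2, x j ^ 4, x j * X j, X j ^ 2] i

def translationMatrix (t : R) : Matrix (Fin 5) (Fin 5) R :=
  !![1, 0, 0, 0, 0;
     0, 1, 0, 0, 0;
     0, 0, 1, 0, 0;
     0, t, 0, 1, 0;
     0, t ^ 2, 0, 2 * t, 1]

theorem translationMatrix_isLowerTriangular (t : R) :
    (translationMatrix t).IsLowerTriangular := by
  intro i j hij
  rw [OrderDual.toDual_lt_toDual] at hij
  fin_cases i <;> fin_cases j <;> simp_all [translationMatrix]

theorem det_translationMatrix (t : R) : (translationMatrix t).det = 1 := by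
  rw [Matrix.det_of_isLowerTriangular _ (translationMatrix_isLowerTriangular t)]
  simp [translationMatrix, Fin.prod_univ_five]

theorem FMatrix_add_smul (x X : ι → R) (t : R) :
    FMatrix x (X + t • x) = translationMatrix t * FMatrix x X := by
  ext i j
  fin_cases i <;> simp [FMatrix, translationMatrix, Matrix.mul_apply, Fin.sum_univ_five] <;> ring

end

/-- For all `x, X ∈ ℂ⁵` and `t ∈ ℂ`, `F(x, X + t·x) = F(x, X)`. -/
theorem F_translation_invariant (x X : Fin 5 → ℂ) (t : ℂ) :
    F x (fun i => X i + t * x i) = F x X :=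
  calc (FMatrix x (X + t • x)).det
      _ = (translationMatrix t * FMatrix x X).det := by rw [FMatrix_add_smul]
      _ = (FMatrix x X).det := by rw [Matrix.det_mul, det_translationMatrix, one_mul]
end

section
/- Let F(x,X) be the determinant of the 5×5 matrix whose i-th column is (1, xᵢ², xᵢ⁴, xᵢXᵢ, Xᵢ²). For all x₁,…,x₅ ∈ ℂ, all signs ε₁,…,ε₅ ∈ {+1,−1} and all μ, λ ∈ ℂ, one has F(x₁,…,x₅, ε₁(μ+λx₁²), ε₂(μ+λx₂²), ε₃(μ+λx₃²), ε₄(μ+λx₄²), ε₅(μ+λx₅²)) = 0. (Hence for each x, the 16 projective lines in ℙ(ℂ⁵/⟨x⟩) spanned by the images of (ε₁,…,ε₅) and (ε₁x₁²,…,ε₅x₅²) all lie on the cubic surface F(x,·)=0.) -/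
/-! If `Xᵢ² = (μ + λxᵢ²)²` for every `i`, the last row `(Xᵢ²)ᵢ` of the matrix equals
`μ²·(1) + 2μλ·(xᵢ²) + λ²·(xᵢ⁴)`, so the rows are dependent and `F(x,X) = 0`.
The signs `εᵢ = ±1` disappear on squaring. -/

theorem F_eq_zero_of_sq_eq (x X : Fin 5 → ℂ) (μ l : ℂ)
    (hX : ∀ j, X j ^ 2 = (μ + l * x j ^ 2) ^ 2) : F x X = 0 := by
  rw [F, ← Matrix.exists_vecMul_eq_zero_iff]
  refine ⟨![μ ^ 2, 2 * μ * l, l ^ 2, 0, -1], fun h => by simpa using congrFun h 4, ?_⟩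
  funext j
  simp only [Matrix.vecMul, dotProduct, Fin.sum_univ_five, Matrix.of_apply, Matrix.cons_val,
    Pi.zero_apply, hX j]
  ring

/-- For any signs `εᵢ = ±1` and all `μ, λ ∈ ℂ`,
`F(x, (ε₁(μ+λx₁²),…,ε₅(μ+λx₅²))) = 0`: the 16 lines in the `W(D₅)`-orbit
of `b₆` lie on the cubic surface `F(x,·) = 0`. -/
theorem lines_b6_orbit_on_cubic (x ε : Fin 5 → ℂ)
    (hε : ∀ i, ε i = 1 ∨ ε i = -1) (μ l : ℂ) :
    F x (fun i => ε i * (μ + l * x i ^ 2)) = 0 :=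
  F_eq_zero_of_sq_eq x _ μ l fun i => by rcases hε i with h | h <;> rw [mul_pow, h] <;> ring
end

section
/- Let F(x,X) be the determinant of the 5×5 matrix whose i-th column is (1, xᵢ², xᵢ⁴, xᵢXᵢ, Xᵢ²). For all x₁,…,x₅ ∈ ℂ and all μ, λ ∈ ℂ, one has F(x₁,…,x₅, μ·x₂x₃x₄x₅ + λx₁³, μ·x₁x₃x₄x₅ + λx₂³, μ·x₁x₂x₄x₅ + λx₃³, μ·x₁x₂x₃x₅ + λx₄³, μ·x₁x₂x₃x₄ + λx₅³) = 0. (Hence the line a₆ in ℙ(ℂ⁵/⟨x⟩) spanned by the images of (x₁⁻¹,…,x₅⁻¹) and (x₁³,…,x₅³) lies on the cubic surface F(x,·)=0.) -/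
/-!
On the line `a₆` the product `xᵢXᵢ = μ·x₁⋯x₅ + λxᵢ⁴` is an affine combination of `1` and `xᵢ⁴`,
so the fourth row of the matrix is `μ·x₁⋯x₅` times the first row plus `λ` times the third.
-/

namespace Matrix

variable {n R : Type*} [Fintype n] [DecidableEq n] [CommRing R]

theorem det_eq_zero_of_row_eq_sum_smul {A : Matrix n n R} {i : n} (c : n → R) (hci : c i = 0)
    (h : A i = ∑ k, c k • A k) : A.det = 0 :=
  calc A.det = (A.updateRow i (∑ k, c k • A k)).det := by rw [← h, updateRow_eq_self]
    _ = c i • A.det := det_updateRow_sum A i c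
    _ = 0 := by rw [hci, zero_smul]

end Matrix

theorem mul_prod_erase_add_mul_pow {ι R : Type*} [Fintype ι] [DecidableEq ι] [CommRing R]
    (x : ι → R) (μ l : R) (i : ι) :
    x i * (μ * ∏ j ∈ Finset.univ.erase i, x j + l * x i ^ 3) = μ * ∏ j, x j + l * x i ^ 4 := by
  rw [← Finset.mul_prod_erase Finset.univ x (Finset.mem_univ i)]
  ring

/-- For all `μ, λ ∈ ℂ`, `F(x, (μ·∏_{j≠1}xⱼ + λx₁³, …, μ·∏_{j≠5}xⱼ + λx₅³)) = 0`:
the line `a₆` spanned by `(x₁⁻¹,…,x₅⁻¹)` and `(x₁³,…,x₅³)` lies on the cubic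
surface `F(x,·) = 0`. -/
theorem line_a6_on_cubic (x : Fin 5 → ℂ) (μ l : ℂ) :
    F x (fun i => μ * (∏ j ∈ Finset.univ.erase i, x j) + l * x i ^ 3) = 0 := by
  refine Matrix.det_eq_zero_of_row_eq_sum_smul (i := 3) ![μ * ∏ j, x j, 0, l, 0, 0] rfl ?_
  ext j
  simp [Fin.sum_univ_five, mul_prod_erase_add_mul_pow]
end

section
/- For i ∈ {1,…,5}, let Tᵢ(X) be the linear form in X₁,…,X₅ given by the determinant of the 4×4 matrix whose columns, indexed by j ∈ {1,…,5}∖{i} in increasing order, are (1, xⱼ, xⱼ², Xⱼ), and let a_{ij} ∈ ℂ[x₁,…,x₅] be the coefficient of Xⱼ in Tᵢ (so a_{ii} = 0). Then for all x₁,…,x₅ ∈ ℂ: a₃₁·a₄₂·(x₁−x₄)(x₂−x₃) = a₃₂·a₄₁·(x₁−x₃)(x₂−x₄). Equivalently, the cross ratio γ₅₆ = a₃₁a₄₂/(a₃₂a₄₁) associated to the tritangent plane t₅₆ equals (x₁−x₃)(x₂−x₄)/((x₁−x₄)(x₂−x₃)). -/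
/-!
Expanding `Tᵢ` along its last row shows that the coefficient `a_{ij}` is, up to the sign of its
cofactor, the Vandermonde determinant of the three points `x_k` with `k ∉ {i, j}`. Each side of
the identity is then a product of differences `x_k - x_l`, and the two products agree.
-/

/-- The linear form `Tᵢ(X)` defining the tritangent plane `t_{i6}`: the
determinant of the 4×4 matrix whose columns, indexed by `j ≠ i` in increasing
order (via `Fin.succAbove`), are `(1, xⱼ, xⱼ², Xⱼ)`. -/
noncomputable def Tform (x : Fin 5 → ℂ) (i : Fin 5) (X : Fin 5 → ℂ) : ℂ :=
  Matrix.det (Matrix.of fun (r c : Fin 4) =>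
    ![(1 : ℂ), x (i.succAbove c), x (i.succAbove c) ^ 2, X (i.succAbove c)] r)

open Matrix

theorem coeff_eq_apply_single {ι R : Type*} [Fintype ι] [DecidableEq ι] [NonAssocSemiring R]
    {f : (ι → R) → R} {a : ι → R} (hf : ∀ X, f X = ∑ j, a j * X j) (j : ι) :
    a j = f (Pi.single j 1) := by
  simp [hf, Pi.single_apply]

theorem Matrix.det_of_row_last_eq_single {R : Type*} [CommRing R] {n : ℕ}
    (M : Matrix (Fin (n + 1)) (Fin (n + 1)) R) (c : Fin (n + 1))
    (hM : M (Fin.last n) = Pi.single c 1) :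
    M.det = (-1) ^ (n + c : ℕ) * (M.submatrix Fin.castSucc c.succAbove).det := by
  rw [det_succ_row M (Fin.last n), hM, Finset.sum_eq_single c]
  · simp
  · intro j _ hj
    simp [hj]
  · simp

theorem Matrix.det_vandermonde_fin_three {R : Type*} [CommRing R] (v : Fin 3 → R) :
    (vandermonde v).det = (v 1 - v 0) * (v 2 - v 0) * (v 2 - v 1) := by
  simp [det_fin_three, vandermonde]
  ring

theorem Tform_single_succAbove (x : Fin 5 → ℂ) (i : Fin 5) (c : Fin 4) :
    Tform x i (Pi.single (i.succAbove c) 1) =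
      (-1) ^ (3 + c : ℕ) * (vandermonde (x ∘ i.succAbove ∘ c.succAbove)).det := by
  rw [Tform, det_of_row_last_eq_single _ c, ← det_transpose]
  · congr 2
    ext r k
    fin_cases k <;> simp [vandermonde]
  · ext k
    simp [Pi.single_apply]

/-- If `a i j` is the coefficient of `Xⱼ` in `Tᵢ`, then
`a₃₁a₄₂(x₁−x₄)(x₂−x₃) = a₃₂a₄₁(x₁−x₃)(x₂−x₄)`, i.e. the cross ratio
`γ₅₆ = a₃₁a₄₂/(a₃₂a₄₁)` equals `(x₁−x₃)(x₂−x₄)/((x₁−x₄)(x₂−x₃))`. -/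
theorem cross_ratio_gamma56 (x : Fin 5 → ℂ) (a : Fin 5 → Fin 5 → ℂ)
    (ha : ∀ (i : Fin 5) (X : Fin 5 → ℂ), Tform x i X = ∑ j, a i j * X j) :
    a 2 0 * a 3 1 * ((x 0 - x 3) * (x 1 - x 2)) =
      a 2 1 * a 3 0 * ((x 0 - x 2) * (x 1 - x 3)) := by
  have coeff (i : Fin 5) (c : Fin 4) : a i (i.succAbove c) =
      (-1) ^ (3 + c : ℕ) * (vandermonde (x ∘ i.succAbove ∘ c.succAbove)).det :=
    (coeff_eq_apply_single (ha i) _).trans (Tform_single_succAbove x i c)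
  have h20 : a 2 0 = -((x 3 - x 1) * (x 4 - x 1) * (x 4 - x 3)) := by
    simpa +decide [det_vandermonde_fin_three, Fin.succAbove] using coeff 2 0
  have h21 : a 2 1 = (x 3 - x 0) * (x 4 - x 0) * (x 4 - x 3) := by
    simpa +decide [det_vandermonde_fin_three, Fin.succAbove] using coeff 2 1
  have h30 : a 3 0 = -((x 2 - x 1) * (x 4 - x 1) * (x 4 - x 2)) := by
    simpa +decide [det_vandermonde_fin_three, Fin.succAbove] using coeff 3 0
  have h31 : a 3 1 = (x 2 - x 0) * (x 4 - x 0) * (x 4 - x 2) := by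
    simpa +decide [det_vandermonde_fin_three, Fin.succAbove] using coeff 3 1
  rw [h20, h21, h30, h31]
  ring
end

section
/- For i ∈ {1,…,5}, let Bᵢ(X) be the linear form in X₁,…,X₅ given by the determinant of the 4×4 matrix whose columns, indexed by j ∈ {1,…,5}∖{i} in increasing order, are (1, xⱼ², xⱼ⁴, xⱼXⱼ), and let b_{ij} ∈ ℂ[x₁,…,x₅] be the coefficient of Xⱼ in Bᵢ (so b_{ii} = 0). Then for all x₁,…,x₅ ∈ ℂ: b₃₁·b₄₂·(x₁²−x₄²)(x₂²−x₃²) = b₃₂·b₄₁·(x₁²−x₃²)(x₂²−x₄²). Equivalently, the cross ratio γ₆₅ = b₃₁b₄₂/(b₃₂b₄₁) associated to the tritangent plane t₆₅ equals (x₁²−x₃²)(x₂²−x₄²)/((x₁²−x₄²)(x₂²−x₃²)). -/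
/-! Expanding `Bᵢ` along its last row gives `b_{ij} = ± xⱼ · V_{ij}`, where `V_{ij}` is the
Vandermonde determinant of the squares `x_k²`, `k ∉ {i, j}`. In `b₃₁b₄₂ / (b₃₂b₄₁)` the factors
`x₁x₂` and the differences involving `x₅²` cancel, leaving the stated ratio of differences of squares. -/

noncomputable def Bform (x : Fin 5 → ℂ) (i : Fin 5) (X : Fin 5 → ℂ) : ℂ :=
  Matrix.det (Matrix.of fun (r c : Fin 4) =>
    ![(1 : ℂ), x (i.succAbove c) ^ 2, x (i.succAbove c) ^ 4,
      x (i.succAbove c) * X (i.succAbove c)] r)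

open Matrix

theorem Matrix.det_updateRow_last_transpose_vandermonde {R : Type*} [CommRing R] {n : ℕ}
    (v w : Fin (n + 1) → R) :
    ((vandermonde v)ᵀ.updateRow (Fin.last n) w).det =
      ∑ c : Fin (n + 1), (-1) ^ (n + (c : ℕ)) * w c * (vandermonde (v ∘ c.succAbove)).det := by
  rw [det_succ_row _ (Fin.last n)]
  refine Finset.sum_congr rfl fun c _ => ?_
  have minor : ((vandermonde v)ᵀ.updateRow (Fin.last n) w).submatrix
      (Fin.last n).succAbove c.succAbove = (vandermonde (v ∘ c.succAbove))ᵀ := by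
    ext r k
    simp [Fin.succAbove_last, vandermonde_apply]
  rw [minor, det_transpose, updateRow_self, Fin.val_last]

theorem Bform_eq_det_updateRow (x : Fin 5 → ℂ) (i : Fin 5) (X : Fin 5 → ℂ) :
    Bform x i X = ((vandermonde fun c => x (i.succAbove c) ^ 2)ᵀ.updateRow (Fin.last 3)
      fun c => x (i.succAbove c) * X (i.succAbove c)).det := by
  unfold Bform
  congr 1
  ext r c
  fin_cases r <;> simp [updateRow_apply, vandermonde_apply, Fin.last, ← pow_mul]

theorem coeff_succAbove_of_Bform_eq_sum {x : Fin 5 → ℂ} {b : Fin 5 → Fin 5 → ℂ}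
    (hb : ∀ (i : Fin 5) (X : Fin 5 → ℂ), Bform x i X = ∑ j, b i j * X j) (i : Fin 5) (c : Fin 4) :
    b i (i.succAbove c) = (-1) ^ (3 + (c : ℕ)) * x (i.succAbove c) *
      (vandermonde fun k => x (i.succAbove (c.succAbove k)) ^ 2).det := by
  have hcoeff : b i (i.succAbove c) = Bform x i (Pi.single (i.succAbove c) 1) := by
    rw [hb]
    exact (dotProduct_single_one (b i) _).symm
  rw [hcoeff, Bform_eq_det_updateRow, det_updateRow_last_transpose_vandermonde,
    Finset.sum_eq_single c]
  · simp [Function.comp_def]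
  · intro c' _ hc'
    simp [hc']
  · simp

/-- If `b i j` is the coefficient of `Xⱼ` in `Bᵢ`, then
`b₃₁b₄₂(x₁²−x₄²)(x₂²−x₃²) = b₃₂b₄₁(x₁²−x₃²)(x₂²−x₄²)`, i.e. the cross ratio
`γ₆₅ = b₃₁b₄₂/(b₃₂b₄₁)` equals `(x₁²−x₃²)(x₂²−x₄²)/((x₁²−x₄²)(x₂²−x₃²))`. -/
theorem cross_ratio_gamma65 (x : Fin 5 → ℂ) (b : Fin 5 → Fin 5 → ℂ)
    (hb : ∀ (i : Fin 5) (X : Fin 5 → ℂ), Bform x i X = ∑ j, b i j * X j) :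
    b 2 0 * b 3 1 * ((x 0 ^ 2 - x 3 ^ 2) * (x 1 ^ 2 - x 2 ^ 2)) =
      b 2 1 * b 3 0 * ((x 0 ^ 2 - x 2 ^ 2) * (x 1 ^ 2 - x 3 ^ 2)) := by
  have h20 := coeff_succAbove_of_Bform_eq_sum hb 2 0
  have h21 := coeff_succAbove_of_Bform_eq_sum hb 2 1
  have h30 := coeff_succAbove_of_Bform_eq_sum hb 3 0
  have h31 := coeff_succAbove_of_Bform_eq_sum hb 3 1
  simp +decide [det_fin_three, vandermonde_apply, Fin.succAbove, Fin.lt_def] at h20 h21 h30 h31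
  rw [h20, h21, h30, h31]
  ring
end

section
/- For i ∈ {1,…,5}, let Tᵢ(X) be the linear form in X₁,…,X₅ given by the determinant of the 4×4 matrix whose columns, indexed by j ∈ {1,…,5}∖{i} in increasing order, are (1, xⱼ, xⱼ², Xⱼ), and let a_{ij} ∈ ℂ[x₁,…,x₅] be the coefficient of Xⱼ in Tᵢ. Then the identity of polynomials a₁₂·a₂₁·T₃(X) = a₂₁·a₃₂·T₁(X) + a₁₂·a₃₁·T₂(X) holds in ℂ[x₁,…,x₅, X₁,…,X₅]. -/
open Matrix

theorem Matrix.eq_zero_of_dotProduct_pow_eq_zero {R : Type*} [CommRing R] [NoZeroDivisors R]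
    {x c : Fin 5 → R} (hx : (vandermonde ![x 2, x 3, x 4]).det ≠ 0) (h0 : c 0 = 0)
    (h1 : c 1 = 0) (hc : ∀ k : Fin 3, c ⬝ᵥ (fun j => x j ^ (k : ℕ)) = 0) : c = 0 := by
  have hvecMul : ![c 2, c 3, c 4] ᵥ* vandermonde ![x 2, x 3, x 4] = 0 := by
    ext k
    simpa [vecMul, dotProduct, vandermonde, Fin.sum_univ_succ, h0, h1] using hc k
  have h234 := eq_zero_of_vecMul_eq_zero hx hvecMul
  ext j
  fin_cases j
  exacts [h0, h1, congrFun h234 0, congrFun h234 1, congrFun h234 2]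

section Tform

variable (x : Fin 5 → ℂ)

theorem Tform_single_self (i : Fin 5) : Tform x i (Pi.single i 1) = 0 :=
  det_eq_zero_of_row_eq_zero 3 fun c => by simp [Fin.succAbove_ne]

theorem Tform_pow_eq_zero (i : Fin 5) (k : Fin 3) : Tform x i (fun j => x j ^ (k : ℕ)) = 0 :=
  det_zero_of_row_eq (i := 3) (j := k.castSucc) (by fin_cases k <;> decide) <| by
    ext c
    fin_cases k <;> simp

theorem Tform_zero_single_one :
    Tform x 0 (Pi.single 1 1) = -(vandermonde ![x 2, x 3, x 4]).det := by
  simp [Tform, det_succ_row _ 3, Fin.sum_univ_four, Fin.sum_univ_three, vandermonde,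
    Fin.succAbove]
  ring

theorem Tform_one_single_zero :
    Tform x 1 (Pi.single 0 1) = -(vandermonde ![x 2, x 3, x 4]).det := by
  simp [Tform, det_succ_row _ 3, Fin.sum_univ_four, Fin.sum_univ_three, vandermonde,
    Fin.succAbove]
  ring

end Tform

/-- With `a i j` the coefficient of `Xⱼ` in `Tᵢ`, the pencil relation
`a₁₂·a₂₁·T₃(X) = a₂₁·a₃₂·T₁(X) + a₁₂·a₃₁·T₂(X)` holds identically. -/
theorem tritangent_pencil_relation (x : Fin 5 → ℂ) (a : Fin 5 → Fin 5 → ℂ)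
    (ha : ∀ (i : Fin 5) (X : Fin 5 → ℂ), Tform x i X = ∑ j, a i j * X j)
    (X : Fin 5 → ℂ) :
    a 0 1 * a 1 0 * Tform x 2 X =
      a 1 0 * a 2 1 * Tform x 0 X + a 0 1 * a 2 0 * Tform x 1 X := by
  have hT (i : Fin 5) (Y : Fin 5 → ℂ) : Tform x i Y = a i ⬝ᵥ Y := ha i Y
  have ha_single (i j : Fin 5) : a i j = Tform x i (Pi.single j 1) := by
    rw [hT, dotProduct_single, mul_one]
  have hsymm : a 1 0 = a 0 1 := by
    rw [ha_single, ha_single, Tform_zero_single_one, Tform_one_single_zero]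
  rw [hsymm]
  by_cases hD : a 0 1 = 0
  · simp [hD]
  have hcomb (Y : Fin 5 → ℂ) : a 0 1 * Tform x 2 Y - a 2 1 * Tform x 0 Y - a 2 0 * Tform x 1 Y
      = (a 0 1 • a 2 - a 2 1 • a 0 - a 2 0 • a 1) ⬝ᵥ Y := by
    simp only [hT, sub_dotProduct, smul_dotProduct, smul_eq_mul]
  have hc : a 0 1 • a 2 - a 2 1 • a 0 - a 2 0 • a 1 = 0 := by
    refine eq_zero_of_dotProduct_pow_eq_zero (x := x) ?_ ?_ ?_ fun k => ?_
    · rwa [ha_single, Tform_zero_single_one, neg_eq_zero] at hD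
    · simp [ha_single 0 0, Tform_single_self, hsymm, mul_comm]
    · simp [ha_single 1 1, Tform_single_self, mul_comm]
    · simp [← hcomb, Tform_pow_eq_zero]
  linear_combination a 0 1 * (hcomb X).trans (by rw [hc, zero_dotProduct])
end

section
/- Let a₃, a₅, x₁, x₂ ∈ ℂ with a₅ ≠ 0, x₁ ≠ 0, x₁² ≠ 1 and a₅x₁ + 1 ≠ 0. Suppose a₅·x₁·(x₂² − 1) = x₁² − x₂² and a₅·x₂·(x₁² − 1) = a₃·(x₁² − x₂²). Then x₂ = a₃x₁/(a₅x₁ + 1) and a₅ + (1 − a₃² + a₅²)·x₁ + a₅·x₁² = 0. -/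
/-!
The first fiber equation is linear in `x₂²`: it says `x₂²(a₅x₁ + 1) = x₁(x₁ + a₅)`, hence
`(a₅x₁ + 1)(x₁² − x₂²) = a₅x₁(x₁² − 1)`. Multiplying the second equation by `a₅x₁ + 1` and
cancelling `a₅(x₁² − 1)` makes it linear in `x₂`, namely `x₂(a₅x₁ + 1) = a₃x₁`. Squaring this and
comparing with the first equation gives `x₁` times the quadratic, and `x₁ ≠ 0`.
-/

namespace DegreeTwoFiber

variable {R : Type*} [CommRing R] {a3 a5 x1 x2 : R}

theorem sq_mul_eq_of_fiber_eq (h1 : a5 * x1 * (x2 ^ 2 - 1) = x1 ^ 2 - x2 ^ 2) :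
    x2 ^ 2 * (a5 * x1 + 1) = x1 * (a5 + x1) := by
  linear_combination h1

variable [IsDomain R]

theorem mul_eq_of_fiber_eqs (ha5 : a5 ≠ 0) (hx1sq : x1 ^ 2 ≠ 1)
    (h1 : a5 * x1 * (x2 ^ 2 - 1) = x1 ^ 2 - x2 ^ 2)
    (h2 : a5 * x2 * (x1 ^ 2 - 1) = a3 * (x1 ^ 2 - x2 ^ 2)) :
    x2 * (a5 * x1 + 1) = a3 * x1 := by
  have hdiff : (a5 * x1 + 1) * (x1 ^ 2 - x2 ^ 2) = a5 * x1 * (x1 ^ 2 - 1) := by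
    linear_combination -sq_mul_eq_of_fiber_eq h1
  refine mul_left_cancel₀ (mul_ne_zero ha5 (sub_ne_zero.mpr hx1sq)) ?_
  linear_combination (a5 * x1 + 1) * h2 + a3 * hdiff

theorem quadratic_of_fiber_eqs (hx1 : x1 ≠ 0)
    (h1 : a5 * x1 * (x2 ^ 2 - 1) = x1 ^ 2 - x2 ^ 2) (hlin : x2 * (a5 * x1 + 1) = a3 * x1) :
    a5 + (1 - a3 ^ 2 + a5 ^ 2) * x1 + a5 * x1 ^ 2 = 0 := by
  refine (mul_eq_zero.mp ?_).resolve_left hx1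
  linear_combination
    -(a5 * x1 + 1) * sq_mul_eq_of_fiber_eq h1 + (x2 * (a5 * x1 + 1) + a3 * x1) * hlin

end DegreeTwoFiber

open DegreeTwoFiber in
/-- The algebraic core of the proof that the classifying map has degree two:
from the two fiber equations one deduces `x₂ = a₃x₁/(a₅x₁+1)` and the
quadratic `a₅ + (1 − a₃² + a₅²)x₁ + a₅x₁² = 0`. -/
theorem degree_two_fiber_equations (a3 a5 x1 x2 : ℂ)
    (ha5 : a5 ≠ 0) (hx1 : x1 ≠ 0) (hx1sq : x1 ^ 2 ≠ 1) (hden : a5 * x1 + 1 ≠ 0)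
    (h1 : a5 * x1 * (x2 ^ 2 - 1) = x1 ^ 2 - x2 ^ 2)
    (h2 : a5 * x2 * (x1 ^ 2 - 1) = a3 * (x1 ^ 2 - x2 ^ 2)) :
    x2 = a3 * x1 / (a5 * x1 + 1) ∧
      a5 + (1 - a3 ^ 2 + a5 ^ 2) * x1 + a5 * x1 ^ 2 = 0 := by
  have hlin := mul_eq_of_fiber_eqs ha5 hx1sq h1 h2
  exact ⟨(eq_div_iff hden).mpr hlin, quadratic_of_fiber_eqs hx1 h1 hlin⟩
end

section
/- Let f₁,…,f₁₀ be the ten quintics of the classifying map, in the stated order. For all a, x, y, z ∈ ℂ, regard each fᵢ(1, a, a+tx, a+ty, a+tz) as a polynomial in t. Then its constant coefficient is 0 and its coefficient of t equals 2a²(1−a²)·cᵢ, where (c₁,…,c₁₀) = (0, 0, y−z, x−z, y−z, −z, x−z, −z, x−y, −x). Hence for a ∉ {0, ±1}, limit as t→0 of Φ(1 : a : a+tx : a+ty : a+tz) is the point (0 : 0 : y−z : x−z : y−z : −z : x−z : −z : x−y : −x) ∈ ℙ⁹, independent of a; so the exceptional divisor over the line {(s:t:t:t:t)} is contracted by Φ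 to a plane in ℙ⁹. -/
/-- The ten quintics `f₁,…,f₁₀` giving the classifying map `Φ : ℙ⁴ ⇢ ℙ⁹`
(indices 0-based: `v 0 = x₁, …, v 4 = x₅`). -/
def quintics {R : Type*} [CommRing R] (v : Fin 5 → R) : Fin 10 → R :=
  ![v 0 * (v 1 ^ 2 - v 2 ^ 2) * (v 3 ^ 2 - v 4 ^ 2),
    v 0 * (v 1 ^ 2 - v 4 ^ 2) * (v 2 ^ 2 - v 3 ^ 2),
    v 1 * (v 0 ^ 2 - v 2 ^ 2) * (v 3 ^ 2 - v 4 ^ 2),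
    v 1 * (v 0 ^ 2 - v 3 ^ 2) * (v 2 ^ 2 - v 4 ^ 2),
    v 2 * (v 0 ^ 2 - v 1 ^ 2) * (v 3 ^ 2 - v 4 ^ 2),
    v 2 * (v 0 ^ 2 - v 3 ^ 2) * (v 1 ^ 2 - v 4 ^ 2),
    v 3 * (v 0 ^ 2 - v 1 ^ 2) * (v 2 ^ 2 - v 4 ^ 2),
    v 3 * (v 0 ^ 2 - v 2 ^ 2) * (v 1 ^ 2 - v 4 ^ 2),
    v 4 * (v 0 ^ 2 - v 1 ^ 2) * (v 2 ^ 2 - v 3 ^ 2),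
    v 4 * (v 0 ^ 2 - v 3 ^ 2) * (v 1 ^ 2 - v 2 ^ 2)]

open Polynomial

/-!
Every `fᵢ` has a factor `xⱼ² − xₖ²` with `j, k ≥ 2`, so `Φ` vanishes on the line `{(s:t:t:t:t)}`.
At `(1, a, a + tx, a + ty, a + tz)` such a factor is `2a(uⱼ − uₖ)t + O(t²)`, where
`u = (0, 0, x, y, z)`. For `i ≥ 3` it is the only such factor and the other two are `≡ a` and
`≡ 1 − a²` mod `t`, which gives the `t`-coefficient `2a²(1 − a²)cᵢ`; `f₁` and `f₂` have two such
factors and vanish to second order.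
-/

section

variable {R : Type*} [CommRing R]

theorem quintics_apply_line (s t : R) (i : Fin 10) : quintics ![s, t, t, t, t] i = 0 := by
  fin_cases i <;> simp [quintics]

theorem map_quintics {S : Type*} [CommRing S] (f : R →+* S) (v : Fin 5 → R) (i : Fin 10) :
    f (quintics v i) = quintics (f ∘ v) i := by
  fin_cases i <;> simp [quintics]

theorem coeff_zero_quintics_near_line (a x y z : R) (i : Fin 10) :
    (quintics ![1, C a, C a + C x * X, C a + C y * X, C a + C z * X] i).coeff 0 = 0 := by
  have hpoint : constantCoeff ∘ ![1, C a, C a + C x * X, C a + C y * X, C a + C z * X] =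
      ![1, a, a, a, a] := by
    funext j; fin_cases j <;> simp
  rw [← constantCoeff_apply, map_quintics, hpoint, quintics_apply_line]

theorem coeff_one_quintics_near_line (a x y z : R) (i : Fin 10) :
    (quintics ![1, C a, C a + C x * X, C a + C y * X, C a + C z * X] i).coeff 1 =
      2 * a ^ 2 * (1 - a ^ 2) * ![0, 0, y - z, x - z, y - z, -z, x - z, -z, x - y, -x] i := by
  fin_cases i <;>
    simp only [quintics, Fin.zero_eta, Fin.mk_one, Fin.reduceFinMk, Matrix.cons_val,
      Matrix.cons_val_zero, Matrix.cons_val_one, Fin.isValue, sq, mul_coeff_zero, mul_coeff_one,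
      coeff_add, coeff_sub, coeff_C_zero, coeff_C_succ, coeff_X_zero, coeff_X_one, coeff_one,
      one_ne_zero, if_true, if_false] <;>
    ring

end

/-- Near the line `{(s:t:t:t:t)}`: each `fᵢ(1, a, a+tx, a+ty, a+tz)`, as a
polynomial in `t`, has constant coefficient `0` and `t`-coefficient
`2a²(1−a²)·cᵢ` with `c = (0,0,y−z,x−z,y−z,−z,x−z,−z,x−y,−x)`; hence for
`a ∉ {0,±1}` the limit as `t → 0` of `Φ(1:a:a+tx:a+ty:a+tz)` is
`(0:0:y−z:x−z:y−z:−z:x−z:−z:x−y:−x)`, independent of `a`. -/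
theorem contraction_over_line_l (a x y z : ℂ) (i : Fin 10) :
    (quintics ![1, C a, C a + C x * X, C a + C y * X, C a + C z * X] i).coeff 0 = 0 ∧
    (quintics ![1, C a, C a + C x * X, C a + C y * X, C a + C z * X] i).coeff 1 =
      2 * a ^ 2 * (1 - a ^ 2) *
        (![0, 0, y - z, x - z, y - z, -z, x - z, -z, x - y, -x] i) :=
  ⟨coeff_zero_quintics_near_line a x y z i, coeff_one_quintics_near_line a x y z i⟩
end

section
/- Let f₁,…,f₁₀ be the ten quintics of the classifying map, in the stated order. For all a, x, y, z ∈ ℂ, regard each fᵢ(1, a, tx, ty, tz) as a polynomial in t. Then its constant coefficient is 0 and its coefficient of t equals a²·cᵢ, where (c₁,…,c₁₀) = (0, 0, 0, 0, 0, x, 0, y, 0, z). Hence for a ≠ 0, the limit as t→0 of Φ(1 : a : tx : ty : tz) is the point (0:0:0:0:0:x:0:y:0:z) ∈ ℙ⁹, independent of a; so the exceptional divisor over the line {(s:t:0:0:0)} is contracted by Φ to a plane in ℙ⁹. -/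
open Polynomial

namespace Polynomial

variable {R : Type*} [CommRing R]

theorem X_sq_dvd_sq_sub_sq (b c : R) : (X : R[X]) ^ 2 ∣ (C b * X) ^ 2 - (C c * X) ^ 2 := by
  rw [mul_pow, mul_pow, ← sub_mul]
  exact dvd_mul_left _ _

theorem coeff_zero_and_one_mul_sq_sub_sq (p : R[X]) (b c : R) :
    (p * ((C b * X) ^ 2 - (C c * X) ^ 2)).coeff 0 = 0 ∧
      (p * ((C b * X) ^ 2 - (C c * X) ^ 2)).coeff 1 = 0 := by
  have h := X_pow_dvd_iff.mp (dvd_mul_of_dvd_right (X_sq_dvd_sq_sub_sq b c) p)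
  exact ⟨h 0 two_pos, h 1 one_lt_two⟩

theorem coeff_zero_and_one_C_mul_X_mul (b : R) (p : R[X]) :
    (C b * X * p).coeff 0 = 0 ∧ (C b * X * p).coeff 1 = b * p.eval 0 := by
  rw [mul_right_comm, mul_comm, coeff_X_mul_zero, coeff_X_mul, coeff_C_mul,
    coeff_zero_eq_eval_zero]
  exact ⟨rfl, rfl⟩

end Polynomial

/-- Near the line `{(s:t:0:0:0)}`: each `fᵢ(1, a, tx, ty, tz)`, as a
polynomial in `t`, has constant coefficient `0` and `t`-coefficient `a²·cᵢ`
with `c = (0,0,0,0,0,x,0,y,0,z)`; hence for `a ≠ 0` the limit as `t → 0` of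
`Φ(1:a:tx:ty:tz)` is `(0:0:0:0:0:x:0:y:0:z)`, independent of `a`. -/
theorem contraction_over_line_m (a x y z : ℂ) (i : Fin 10) :
    (quintics ![1, C a, C x * X, C y * X, C z * X] i).coeff 0 = 0 ∧
    (quintics ![1, C a, C x * X, C y * X, C z * X] i).coeff 1 =
      a ^ 2 * (![0, 0, 0, 0, 0, x, 0, y, 0, z] i) := by
  fin_cases i <;> simp only [quintics, Fin.reduceFinMk, Matrix.cons_val, mul_zero, one_pow]
  -- `with_reducible` stops the failed match on `f₆, f₈, f₁₀` from unfolding arithmetic in `ℂ`.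
  all_goals first
    | with_reducible exact coeff_zero_and_one_mul_sq_sub_sq _ _ _
    | rw [mul_assoc]
      refine (coeff_zero_and_one_C_mul_X_mul _ _).imp_right (·.trans ?_)
      simp only [eval_mul, eval_sub, eval_one, eval_pow, eval_C, eval_X]
      ring
end

section
/- Let f₁,…,f₁₀ be the ten quintics of the classifying map, in the stated order. For all y₁, y₂, y₃, y₄ ∈ ℂ, regard each fᵢ(1+ty₁, 1+ty₂, 1+ty₃, 1+ty₄, 1) as a polynomial in t. Then its coefficients of t⁰ and t¹ are 0 and its coefficient of t² equals 4hᵢ, where (h₁,…,h₁₀) = (y₄(y₂−y₃), y₂(y₃−y₄), y₄(y₁−y₃), y₃(y₁−y₄), y₄(y₁−y₂), y₂(y₁−y₄), y₃(y₁−y₂), y₂(y₁−y₃), (y₁−y₂)(y₃−y₄), (y₂−y₃)(y₁−y₄)). Moreover each quadric hᵢ vanishes at the five points (1,0,0,0), (0,1,0,0), (0,0,1,0), (0,0,0,1), (1,1,1,1) of ℂ⁴. -/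
open Polynomial

/-- The ten quadrics `h₁,…,h₁₀` appearing on the exceptional divisor over the
point `p₁ = (1:1:1:1:1)` (indices 0-based: `y 0 = y₁, …, y 3 = y₄`). -/
def hquad (y : Fin 4 → ℂ) : Fin 10 → ℂ :=
  ![y 3 * (y 1 - y 2), y 1 * (y 2 - y 3),
    y 3 * (y 0 - y 2), y 2 * (y 0 - y 3),
    y 3 * (y 0 - y 1), y 1 * (y 0 - y 3),
    y 2 * (y 0 - y 1), y 1 * (y 0 - y 2),
    (y 0 - y 1) * (y 2 - y 3), (y 1 - y 2) * (y 0 - y 3)]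

/-! Each fᵢ has the shape `u (v² - w²)(s² - r²)`. On the line `t ↦ (1 + ty₁, …, 1 + ty₄, 1)`
all five coordinates are `1` at `t = 0`, so `t` divides `v - w` and `s - r`. Hence `fᵢ = t² g`
with `g(0) = u(0) · 2(v - w)'(0) · 2(s - r)'(0)`, which is `4 hᵢ`. -/

namespace Polynomial

variable {R : Type*} [CommRing R]

lemma exists_sq_sub_sq_eq_X_mul {v w : R[X]} (h : v.coeff 0 = w.coeff 0) :
    ∃ q : R[X], v ^ 2 - w ^ 2 = X * q ∧
      q.coeff 0 = 2 * v.coeff 0 * (v.coeff 1 - w.coeff 1) := by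
  obtain ⟨p, hp⟩ : X ∣ v - w := X_dvd_iff.2 (by simp [h])
  have hp0 : p.coeff 0 = v.coeff 1 - w.coeff 1 := by
    rw [← coeff_X_mul p 0, ← hp, coeff_sub]
  refine ⟨(v + w) * p, by rw [sq_sub_sq, hp, mul_left_comm], ?_⟩
  rw [mul_coeff_zero, hp0, coeff_add, ← h]
  ring

lemma coeff_mul_sq_sub_sq_mul_sq_sub_sq {u v w s r : R[X]}
    (hvw : v.coeff 0 = w.coeff 0) (hsr : s.coeff 0 = r.coeff 0) :
    (u * (v ^ 2 - w ^ 2) * (s ^ 2 - r ^ 2)).coeff 0 = 0 ∧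
    (u * (v ^ 2 - w ^ 2) * (s ^ 2 - r ^ 2)).coeff 1 = 0 ∧
    (u * (v ^ 2 - w ^ 2) * (s ^ 2 - r ^ 2)).coeff 2 =
      4 * u.coeff 0 * v.coeff 0 * s.coeff 0 *
        (v.coeff 1 - w.coeff 1) * (s.coeff 1 - r.coeff 1) := by
  obtain ⟨q, hq, hq0⟩ := exists_sq_sub_sq_eq_X_mul hvw
  obtain ⟨q', hq', hq'0⟩ := exists_sq_sub_sq_eq_X_mul hsr
  have hf : u * (v ^ 2 - w ^ 2) * (s ^ 2 - r ^ 2) = X ^ 2 * (u * q * q') := by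
    rw [hq, hq']; ring
  refine ⟨by simp [hf], by simp [hf, coeff_X_pow_mul'], ?_⟩
  rw [hf, coeff_X_pow_mul', if_pos le_rfl, Nat.sub_self, mul_coeff_zero, mul_coeff_zero,
    hq0, hq'0]
  ring

end Polynomial

/-- On the exceptional divisor over `p₁ = (1:1:1:1:1)`: each
`fᵢ(1+ty₁, 1+ty₂, 1+ty₃, 1+ty₄, 1)`, as a polynomial in `t`, has coefficients
of `t⁰` and `t¹` equal to `0` and coefficient of `t²` equal to `4hᵢ(y)`;
moreover each quadric `hᵢ` vanishes at the five points
`(1,0,0,0), (0,1,0,0), (0,0,1,0), (0,0,0,1), (1,1,1,1)` of `ℂ⁴`. -/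
theorem map_on_exceptional_divisor_p1 :
    (∀ (y : Fin 4 → ℂ) (i : Fin 10),
      (quintics ![1 + C (y 0) * X, 1 + C (y 1) * X,
          1 + C (y 2) * X, 1 + C (y 3) * X, 1] i).coeff 0 = 0 ∧
      (quintics ![1 + C (y 0) * X, 1 + C (y 1) * X,
          1 + C (y 2) * X, 1 + C (y 3) * X, 1] i).coeff 1 = 0 ∧
      (quintics ![1 + C (y 0) * X, 1 + C (y 1) * X,
          1 + C (y 2) * X, 1 + C (y 3) * X, 1] i).coeff 2 = 4 * hquad y i) ∧
    (∀ (i : Fin 10),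
      ∀ p ∈ ({![1, 0, 0, 0], ![0, 1, 0, 0], ![0, 0, 1, 0], ![0, 0, 0, 1],
          ![1, 1, 1, 1]} : Set (Fin 4 → ℂ)), hquad p i = 0) := by
  refine ⟨fun y i => ?_, fun i p hp => ?_⟩
  · fin_cases i <;>
      refine (coeff_mul_sq_sub_sq_mul_sq_sub_sq (by simp) (by simp)).imp_right
        (And.imp_right fun h => h.trans ?_) <;>
      simp [hquad] <;> ring
  · rcases hp with rfl | rfl | rfl | rfl | rfl <;> fin_cases i <;> simp [hquad]
end

section
/- Let f₁,…,f₁₀ be the ten quintics of the classifying map, in the stated order. For all s, t, u ∈ ℂ, at the point (s, s, t, u, s) ∈ ℂ⁵ one has f₂ = f₅ = f₆ = f₇ = f₈ = f₉ = 0, f₃ = f₁, f₄ = f₁ and f₁₀ = −f₁, where f₁(s,s,t,u,s) = s(s²−t²)(u²−s²). Hence the entire plane γ = {(s:s:t:u:s)} ⊂ ℙ⁴ is mapped by Φ to the single point (1:0:1:1:0:0:0:0:0:−1) ∈ ℙ⁹. -/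
/-! On `γ` the coordinates `x₁, x₂, x₅` coincide. Each of `f₂, f₅, f₆, f₇, f₈, f₉` has a factor
`xᵢ² − xⱼ²` with `i, j ∈ {1, 2, 5}` and so vanishes there, while `f₃, f₄, f₁₀` become `±f₁`
after permuting `x₁, x₂, x₅` and reordering the two quadratic factors. -/

theorem quintics_of_apply_one_eq_of_apply_four_eq {R : Type*} [CommRing R] {v : Fin 5 → R}
    (h₁ : v 1 = v 0) (h₄ : v 4 = v 0) :
    quintics v 1 = 0 ∧ quintics v 4 = 0 ∧ quintics v 5 = 0 ∧ quintics v 6 = 0 ∧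
    quintics v 7 = 0 ∧ quintics v 8 = 0 ∧
    quintics v 2 = quintics v 0 ∧ quintics v 3 = quintics v 0 ∧ quintics v 9 = -quintics v 0 ∧
    quintics v 0 = v 0 * (v 0 ^ 2 - v 2 ^ 2) * (v 3 ^ 2 - v 0 ^ 2) := by
  refine ⟨?_, ?_, ?_, ?_, ?_, ?_, ?_, ?_, ?_, ?_⟩ <;>
    simp only [quintics, Matrix.cons_val, h₁, h₄] <;> ring

/-- On the plane `γ = {(s:s:t:u:s)}`: the quintics satisfy
`f₂ = f₅ = f₆ = f₇ = f₈ = f₉ = 0`, `f₃ = f₄ = f₁`, `f₁₀ = −f₁` and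
`f₁ = s(s²−t²)(u²−s²)`; hence `Φ` maps the whole plane `γ` to the cusp
`(1:0:1:1:0:0:0:0:0:−1) ∈ ℙ⁹`. -/
theorem plane_gamma_to_cusp (s t u : ℂ) :
    quintics ![s, s, t, u, s] 1 = 0 ∧
    quintics ![s, s, t, u, s] 4 = 0 ∧
    quintics ![s, s, t, u, s] 5 = 0 ∧
    quintics ![s, s, t, u, s] 6 = 0 ∧
    quintics ![s, s, t, u, s] 7 = 0 ∧
    quintics ![s, s, t, u, s] 8 = 0 ∧
    quintics ![s, s, t, u, s] 2 = quintics ![s, s, t, u, s] 0 ∧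
    quintics ![s, s, t, u, s] 3 = quintics ![s, s, t, u, s] 0 ∧
    quintics ![s, s, t, u, s] 9 = -quintics ![s, s, t, u, s] 0 ∧
    quintics ![s, s, t, u, s] 0 = s * (s ^ 2 - t ^ 2) * (u ^ 2 - s ^ 2) :=
  quintics_of_apply_one_eq_of_apply_four_eq rfl rfl
end
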